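/- If m ≥ M′(p,b), then for every natural number n, 1 − φ(1)^n ≤ 1 − (1 − β·p^b·(1 + p^{−mb})/p^{mb})^n. -/

import Mathlib

/-- β = (p^{b+1} − 1)/(p^b (p − 1)) -/
noncomputable def betaC (p : ℕ) (b : ℝ) : ℝ :=
  ((p : ℝ) ^ (b + 1) - 1) / ((p : ℝ) ^ b * ((p : ℝ) - 1))

/-- φ(k), with φ(0) = 1. -/
noncomputable def phiC (p : ℕ) (b : ℝ) (m : ℕ) (k : ℕ) : ℝ :=
  if k = 0 then 1 else
    ((p : ℝ) ^ ((m : ℝ) * b) / ((p : ℝ) ^ ((m : ℝ) * b) - 1)) *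
      (1 - betaC p b * (p : ℝ) ^ (((k : ℝ) - (m : ℝ)) * b))

/-- M′(p,b) = (1/b)·log_p(2√2·p^b). -/
noncomputable def Mprime (p : ℕ) (b : ℝ) : ℝ :=
  (1 / b) * Real.logb p (2 * Real.sqrt 2 * (p : ℝ) ^ b)

/-! Write `A = β p^b` and `P = p^{mb}`. Then `φ(1) = (P - A)/(P - 1)`, while the other base is
`1 - A(P + 1)/P²`, and the two differ by `(P² - A)/(P²(P - 1))`. Both this difference and the
second base are nonnegative once `A(P + 1) ≤ P²`, which follows from `A ≤ 2p^b` (as `p ≥ 2`) and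
`P ≥ 2√2 p^b` (which is `m ≥ M′`). Raising to the `n`-th power preserves the order. -/

lemma one_sub_mul_one_add_inv_div_mem_Icc {A P : ℝ} (hP : 1 < P) (hAP : A * (P + 1) ≤ P ^ 2) :
    0 ≤ 1 - A * (1 + P⁻¹) / P ∧ 1 - A * (1 + P⁻¹) / P ≤ (P - A) / (P - 1) := by
  have hP0 : 0 < P := by linarith
  have hP1 : 0 < P - 1 := by linarith
  have hA : A ≤ P ^ 2 := by nlinarith
  have hrewrite : A * (1 + P⁻¹) / P = A * (P + 1) / P ^ 2 := by field_simp
  rw [hrewrite]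
  constructor
  · rw [sub_nonneg, div_le_one (by positivity)]
    exact hAP
  · rw [← sub_nonneg]
    have hgap : (P - A) / (P - 1) - (1 - A * (P + 1) / P ^ 2) = (P ^ 2 - A) / (P ^ 2 * (P - 1)) := by
      field_simp
      ring
    rw [hgap]
    exact div_nonneg (by linarith) (by positivity)

lemma two_mul_mul_add_one_le_sq {Q P : ℝ} (hQ : 1 ≤ Q) (hPQ : 2 * √2 * Q ≤ P) :
    2 * Q * (P + 1) ≤ P ^ 2 := by
  have hsq : √2 ^ 2 = 2 := Real.sq_sqrt zero_le_two
  have hs : 1 < √2 := Real.one_lt_sqrt_two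
  have hP2 : 2 * √2 ≤ P := by nlinarith
  -- `(√2 - 1) · 2√2 = 4 - 2√2 ≥ 1` because `√2 ≤ 3/2`
  have hP : P + 1 ≤ √2 * P := by
    nlinarith [mul_le_mul_of_nonneg_left hP2 (sub_nonneg.2 hs.le)]
  calc 2 * Q * (P + 1) ≤ 2 * Q * (√2 * P) := by gcongr
    _ = 2 * √2 * Q * P := by ring
    _ ≤ P ^ 2 := by rw [sq]; gcongr; linarith

section

variable {p : ℕ} {b : ℝ}

lemma betaC_mul_rpow_le (hp : 2 ≤ p) : betaC p b * (p : ℝ) ^ b ≤ 2 * (p : ℝ) ^ b := by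
  have hp2 : (2 : ℝ) ≤ p := by exact_mod_cast hp
  have hQ : 0 < (p : ℝ) ^ b := by positivity
  have hβ : betaC p b * (p : ℝ) ^ b = (p * (p : ℝ) ^ b - 1) / (p - 1) := by
    rw [betaC, Real.rpow_add_one (by positivity)]
    field_simp
  rw [hβ, div_le_iff₀ (by linarith)]
  nlinarith

lemma phiC_one (hp : 0 < p) (m : ℕ) :
    phiC p b m 1 = ((p : ℝ) ^ ((m : ℝ) * b) - betaC p b * (p : ℝ) ^ b) /
      ((p : ℝ) ^ ((m : ℝ) * b) - 1) := by
  have hp' : (0 : ℝ) < p := by exact_mod_cast hp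
  have hP : (0 : ℝ) < (p : ℝ) ^ ((m : ℝ) * b) := by positivity
  rw [phiC, if_neg one_ne_zero, Nat.cast_one, show (1 - (m : ℝ)) * b = b - m * b by ring,
    Real.rpow_sub hp']
  field_simp

lemma two_mul_sqrt_two_mul_rpow_le_of_Mprime_le (hp : 1 < p) (hb : 0 < b) {x : ℝ}
    (hx : Mprime p b ≤ x) : 2 * √2 * (p : ℝ) ^ b ≤ (p : ℝ) ^ (x * b) := by
  have hp' : (1 : ℝ) < p := by exact_mod_cast hp
  rw [Mprime, one_div, inv_mul_le_iff₀ hb,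
    Real.logb_le_iff_le_rpow hp' (by positivity), mul_comm b] at hx
  exact hx

end

theorem stmt12_general (p : ℕ) (hp : p.Prime) (b : ℝ) (hb : 0 < b) (m : ℕ)
    (hM : Mprime p b ≤ (m : ℝ)) (n : ℕ) :
    1 - phiC p b m 1 ^ n ≤
      1 - (1 - betaC p b * (p : ℝ) ^ b * (1 + (p : ℝ) ^ (-(m : ℝ) * b)) /
            (p : ℝ) ^ ((m : ℝ) * b)) ^ n := by
  have hp' : (1 : ℝ) < p := by exact_mod_cast hp.one_lt
  have hQ : 1 ≤ (p : ℝ) ^ b := Real.one_le_rpow hp'.le hb.le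
  have hPQ := two_mul_sqrt_two_mul_rpow_le_of_Mprime_le hp.one_lt hb hM
  set A := betaC p b * (p : ℝ) ^ b
  set P := (p : ℝ) ^ ((m : ℝ) * b)
  have hP : 1 < P := by nlinarith [Real.one_lt_sqrt_two]
  have hAP : A * (P + 1) ≤ P ^ 2 :=
    (mul_le_mul_of_nonneg_right (betaC_mul_rpow_le hp.two_le) (by linarith)).trans
      (two_mul_mul_add_one_le_sq hQ hPQ)
  obtain ⟨hbase_nonneg, hbase_le⟩ := one_sub_mul_one_add_inv_div_mem_Icc hP hAP
  rw [phiC_one hp.pos, neg_mul, Real.rpow_neg (by positivity)]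
  linarith [pow_le_pow_left₀ hbase_nonneg hbase_le n]

/-- If `m ≥ M′(p,b)`, then for every natural number `n`,
`1 − φ(1)^n ≤ 1 − (1 − β·p^b·(1 + p^{−mb})/p^{mb})^n`. -/
theorem stmt12 (p : ℕ) (hp : p.Prime) (b : ℝ) (hb : 0 < b) (m : ℕ) (hm : 0 < m)
    (hM : Mprime p b ≤ (m : ℝ)) (n : ℕ) :
    1 - phiC p b m 1 ^ n ≤
      1 - (1 - betaC p b * (p : ℝ) ^ b * (1 + (p : ℝ) ^ (-(m : ℝ) * b)) /
            (p : ℝ) ^ ((m : ℝ) * b)) ^ n :=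
  stmt12_general p hp b hb m hM n
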